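/- arXiv:1609.07775 — 2 statements merged into one kernel-verified Lean document; each statement's English description precedes it below -/
import Mathlib

section
/- Let n, m ≥ 1. Let (H^{b,c})_{b∈[n], c∈[m]} be an (n, m)-controlled family of Hadamard matrices of dimension nm, with rows indexed by [nm] and columns indexed by [n]×[m], so entries are H^{b,c}_{a,(e,g)}. Let (P^{c,g})_{c,g∈[m]} be an (m, m)-controlled family of quantum Latin squares of dimension n, and let Q be a quantum Latin square of dimension m. For a ∈ [nm], b ∈ [n], c ∈ [m], define the matrix U_{(a,b,c)} with rows indexed by [m]×[n] and columns indexed by [m]×[n], whose entry at row (d,e) and column (g,f) is H^{b,c}_{a,(e,g)} · P^{c,g}_{e,b,f} · Q_{c,g,d}, for d, g ∈ [m] and e, f ∈ [n]. Then (U_{(a,b,c)})_{(a,b,c)∈[nm]×[n]×[m]} is a unitary error basis of dimension nm. -/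
open scoped ComplexConjugate Matrix

noncomputable section

/-- A (possibly rectangularly-indexed) complex Hadamard matrix: all entries have
modulus 1, and distinct rows are orthogonal, with `∑ k, H i k * conj (H j k) = n·δ_{i,j}`
where `n` is the dimension (the common cardinality of the row and column index sets). -/
def IsHadamard {R C : Type*} [Fintype R] [Fintype C] [DecidableEq R]
    (H : Matrix R C ℂ) : Prop :=
  Fintype.card R = Fintype.card C ∧
  (∀ i j, ‖H i j‖ = 1) ∧
  (∀ i j, ∑ k, H i k * conj (H j k) = if i = j then (Fintype.card R : ℂ) else 0)

/-- A quantum Latin square of dimension `n`: an `n × n` grid (rows and columns indexed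
by `A`, with `|A| = n`) of vectors in `ℂ^n` (coordinates indexed by `X`, `|X| = n`),
such that every row and every column is an orthonormal basis. -/
def IsQLS {A X : Type*} [Fintype A] [Fintype X] [DecidableEq A]
    (Q : A → A → X → ℂ) : Prop :=
  Fintype.card X = Fintype.card A ∧
  (∀ a b c, ∑ i, conj (Q a b i) * Q a c i = if b = c then 1 else 0) ∧
  (∀ a b c, ∑ i, conj (Q a c i) * Q b c i = if a = b then 1 else 0)

/-- A unitary error basis of dimension `n`: a family of `n²` unitary matrices
(rows indexed by `R`, columns by `C`, both of cardinality `n`; elements indexed by `A`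
with `|A| = n²`) that are orthogonal with respect to the trace inner product:
`Tr(U_a† U_b) = n·δ_{a,b}`. -/
def IsUEB {A R C : Type*} [Fintype A] [Fintype R] [Fintype C]
    [DecidableEq A] [DecidableEq R] [DecidableEq C]
    (U : A → Matrix R C ℂ) : Prop :=
  Fintype.card A = (Fintype.card R) ^ 2 ∧
  (∀ a, U a * (U a)ᴴ = 1 ∧ (U a)ᴴ * U a = 1) ∧
  (∀ a b, Matrix.trace ((U a)ᴴ * U b) = if a = b then (Fintype.card R : ℂ) else 0)

/-!
Writing `U = U_{(a,b,c)}`, the inner product of column `(g,f)` of `U` with column `(g',f')` of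
`U' = U_{(a',b',c')}` factors as an inner product of two vectors of `Q` times a sum over `e`
alone. For `U = U'` the `Q`-factor is `δ_{g,g'}` (rows of `Q` are orthonormal), the Hadamard
entries have modulus one, and what is left is `δ_{f,f'}` because the coordinates of the
column `b` of the quantum Latin square `P^{c,g}` form a unitary matrix; so `U` is unitary.
For the trace, the `Q`-factor is `δ_{c,c'}` (columns of `Q`), summing over `f` gives `δ_{b,b'}`
(rows of `P^{c,g}`), and the remaining sum over `(e,g)` is the orthogonality of rows `a, a'`
of the Hadamard matrix `H^{b,c}`.
-/

open Matrix

theorem IsHadamard.conj_mul_self {R C : Type*} [Fintype R] [Fintype C] [DecidableEq R]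
    {H : Matrix R C ℂ} (hH : IsHadamard H) (i : R) (k : C) : conj (H i k) * H i k = 1 := by
  rw [mul_comm, Complex.mul_conj, Complex.normSq_eq_norm_sq, hH.2.1 i k]
  norm_num

theorem IsHadamard.sum_conj_mul {R C : Type*} [Fintype R] [Fintype C] [DecidableEq R]
    {H : Matrix R C ℂ} (hH : IsHadamard H) (i j : R) :
    ∑ k, conj (H i k) * H j k = if i = j then (Fintype.card R : ℂ) else 0 := by
  have := congrArg conj (hH.2.2 i j)
  simpa [map_sum, apply_ite conj] using this

/-- The coordinates of the vectors in one column of a quantum Latin square form a unitary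
matrix, so they are orthonormal also when read along the column. -/
theorem IsQLS.sum_conj_mul_column {A X : Type*} [Fintype A] [Fintype X] [DecidableEq A]
    [DecidableEq X] {Q : A → A → X → ℂ} (hQ : IsQLS Q) (c : A) (i j : X) :
    ∑ a, conj (Q a c i) * Q a c j = if i = j then 1 else 0 := by
  let V : Matrix A X ℂ := Matrix.of fun a i => conj (Q a c i)
  have hV : V * Vᴴ = 1 := by
    ext a b
    simpa [V, Matrix.mul_apply, Matrix.one_apply] using hQ.2.2 a b c
  have hVH := congrFun (congrFun ((mul_eq_one_comm_of_card_eq _ _ _ hQ.1.symm).mp hV) j) i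
  simpa [V, Matrix.mul_apply, Matrix.one_apply, mul_comm, eq_comm] using hVH

section TernaryConstruction

variable {N M X : Type*} [Fintype N] [Fintype M]

/-- `ternaryMatrix H P Q a b c` is `U_{(a,b,c)}`, rows indexed by `(d,e)`, columns by `(g,f)`. -/
def ternaryMatrix (H : N → M → Matrix X (N × M) ℂ) (P : M → M → N → N → N → ℂ)
    (Q : M → M → M → ℂ) (a : X) (b : N) (c : M) : Matrix (M × N) (M × N) ℂ :=
  Matrix.of fun de gf => H b c a (de.2, gf.1) * P c gf.1 de.2 b gf.2 * Q c gf.1 de.1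

variable {H : N → M → Matrix X (N × M) ℂ} {P : M → M → N → N → N → ℂ} {Q : M → M → M → ℂ}

theorem conjTranspose_ternaryMatrix_mul_apply (a a' : X) (b b' : N) (c c' g g' : M)
    (f f' : N) :
    ((ternaryMatrix H P Q a b c)ᴴ * ternaryMatrix H P Q a' b' c') (g, f) (g', f') =
      (∑ d, conj (Q c g d) * Q c' g' d) *
        ∑ e, conj (H b c a (e, g)) * H b' c' a' (e, g') *
          (conj (P c g e b f) * P c' g' e b' f') := by
  simp only [mul_apply, conjTranspose_apply, ternaryMatrix, of_apply, Fintype.sum_prod_type,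
    Finset.sum_mul_sum, ← starRingEnd_apply, map_mul]
  refine Finset.sum_congr rfl fun d _ => Finset.sum_congr rfl fun e _ => ?_
  ring

variable [Fintype X] [DecidableEq N] [DecidableEq M] [DecidableEq X]

theorem conjTranspose_ternaryMatrix_mul_self (hH : ∀ b c, IsHadamard (H b c))
    (hP : ∀ c g, IsQLS (P c g)) (hQ : IsQLS Q) (a : X) (b : N) (c : M) :
    (ternaryMatrix H P Q a b c)ᴴ * ternaryMatrix H P Q a b c = 1 := by
  ext ⟨g, f⟩ ⟨g', f'⟩
  rw [conjTranspose_ternaryMatrix_mul_apply, hQ.2.1, one_apply]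
  obtain rfl | hg := eq_or_ne g g'
  · simp only [(hH b c).conj_mul_self, one_mul, if_true, (hP c g).sum_conj_mul_column,
      Prod.mk.injEq, true_and]
  · simp [hg]

theorem trace_conjTranspose_ternaryMatrix_mul (hH : ∀ b c, IsHadamard (H b c))
    (hP : ∀ c g, IsQLS (P c g)) (hQ : IsQLS Q) (a a' : X) (b b' : N) (c c' : M) :
    trace ((ternaryMatrix H P Q a b c)ᴴ * ternaryMatrix H P Q a' b' c') =
      if (a, b, c) = (a', b', c') then (Fintype.card X : ℂ) else 0 := by
  simp only [trace, diag_apply, Fintype.sum_prod_type, conjTranspose_ternaryMatrix_mul_apply,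
    hQ.2.2]
  obtain rfl | hc := eq_or_ne c c'
  swap
  · simp [hc]
  simp only [if_true, one_mul]
  calc ∑ g, ∑ f, ∑ e, conj (H b c a (e, g)) * H b' c a' (e, g) *
          (conj (P c g e b f) * P c g e b' f)
      = ∑ g, ∑ e, conj (H b c a (e, g)) * H b' c a' (e, g) *
          ∑ f, conj (P c g e b f) * P c g e b' f := by
        simp only [Finset.mul_sum]
        exact Finset.sum_congr rfl fun g _ => Finset.sum_comm
    _ = if b = b' then ∑ k, conj (H b c a k) * H b c a' k else 0 := by
        simp only [(hP _ _).2.1, mul_ite, mul_one, mul_zero]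
        split_ifs with hb
        · subst hb
          rw [Fintype.sum_prod_type, Finset.sum_comm]
        · simp
    _ = _ := by
        obtain rfl | hb := eq_or_ne b b'
        · simp [(hH b c).sum_conj_mul]
        · simp [hb]

theorem isUEB_ternaryMatrix (hH : ∀ b c, IsHadamard (H b c)) (hP : ∀ c g, IsQLS (P c g))
    (hQ : IsQLS Q) :
    IsUEB fun abc : X × N × M => ternaryMatrix H P Q abc.1 abc.2.1 abc.2.2 := by
  have hcard : ∀ b c, Fintype.card X = Fintype.card (M × N) := fun b c =>
    (hH b c).1.trans (Fintype.card_congr (Equiv.prodComm N M))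
  refine ⟨?_, fun ⟨a, b, c⟩ => ?_, fun ⟨a, b, c⟩ ⟨a', b', c'⟩ => ?_⟩
  · rw [Fintype.card_prod X, Fintype.card_congr (Equiv.prodComm N M)]
    rcases isEmpty_or_nonempty (M × N) with hMN | ⟨c, b⟩
    · rw [Fintype.card_eq_zero (α := M × N), mul_zero, sq, mul_zero]
    · rw [hcard b c, sq]
  · have h := conjTranspose_ternaryMatrix_mul_self hH hP hQ a b c
    exact ⟨mul_eq_one_comm.mpr h, h⟩
  · rw [trace_conjTranspose_ternaryMatrix_mul hH hP hQ, hcard b c]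

end TernaryConstruction

theorem ternary_ueb_b_general (n m : ℕ)
    (H : Fin n → Fin m → Matrix (Fin (n * m)) (Fin n × Fin m) ℂ)
    (P : Fin m → Fin m → (Fin n → Fin n → Fin n → ℂ))
    (Q : Fin m → Fin m → Fin m → ℂ)
    (hH : ∀ b c, IsHadamard (H b c))
    (hP : ∀ c g, IsQLS (P c g))
    (hQ : IsQLS Q) :
    IsUEB (fun abc : Fin (n * m) × Fin n × Fin m =>
      Matrix.of fun (de gf : Fin m × Fin n) =>
        H abc.2.1 abc.2.2 abc.1 (de.2, gf.1) * P abc.2.2 gf.1 de.2 abc.2.1 gf.2 *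
          Q abc.2.2 gf.1 de.1) :=
  isUEB_ternaryMatrix hH hP hQ

/-- an (n,m)-controlled family of nm-dimensional Hadamard matrices (rows
indexed by [nm], columns by [n]×[m]), an (m,m)-controlled family of n-dimensional
quantum Latin squares, and an m-dimensional quantum Latin square produce an
nm-dimensional UEB whose entry at row (d,e) and column (g,f) is
`H^{b,c}_{a,(e,g)} · P^{c,g}_{e,b,f} · Q_{c,g,d}`. -/
theorem ternary_ueb_b (n m : ℕ) (hn : 1 ≤ n) (hm : 1 ≤ m)
    (H : Fin n → Fin m → Matrix (Fin (n * m)) (Fin n × Fin m) ℂ)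
    (P : Fin m → Fin m → (Fin n → Fin n → Fin n → ℂ))
    (Q : Fin m → Fin m → Fin m → ℂ)
    (hH : ∀ b c, IsHadamard (H b c))
    (hP : ∀ c g, IsQLS (P c g))
    (hQ : IsQLS Q) :
    IsUEB (fun abc : Fin (n * m) × Fin n × Fin m =>
      Matrix.of fun (de gf : Fin m × Fin n) =>
        H abc.2.1 abc.2.2 abc.1 (de.2, gf.1) * P abc.2.2 gf.1 de.2 abc.2.1 gf.2 *
          Q abc.2.2 gf.1 de.1) :=
  ternary_ueb_b_general n m H P Q hH hP hQ
end
end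

section
/- Let n ≥ 1. Let (H^{b,c})_{b,c∈[n²]} be an (n², n²)-controlled family of Hadamard matrices of dimension n², let P and Q be quantum Latin squares of dimension n², and let V be a unitary error basis on ℂ^n. For a, b, c ∈ [n²], define the matrix U_{(a,b,c)} with rows and columns indexed by [n²]×[n], whose entry at row (d,e) and column (f,g) is ∑_{r∈[n²]} H^{b,c}_{a,r} · P_{c,r,d} · Q_{r,b,f} · V_{r,e,g}, for d, f ∈ [n²] and e, g ∈ [n]. Then (U_{(a,b,c)})_{(a,b,c)∈[n²]×[n²]×[n²]} is a unitary error basis of dimension n³. -/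
open scoped ComplexConjugate Matrix

noncomputable section

/-!
Write `U_{(a,b,c)} = ∑ᵣ H^{b,c}_{a,r} • (P_{c,r} Q_{r,b}ᵀ) ⊗ V_r`. In `U U†` the cross terms
`r ≠ s` vanish because the column `(Q_{r,b})_r` of `Q` is orthonormal, leaving
`∑ᵣ |H^{b,c}_{a,r}|² P_{c,r} P_{c,r}† ⊗ V_r V_r† = (∑ᵣ P_{c,r} P_{c,r}†) ⊗ 1 = 1`, since the row
`(P_{c,r})_r` of `P` is an orthonormal basis. In `Tr(U_{(a,b,c)}† U_{(a',b',c')})` the trace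
orthogonality of `V` again kills the cross terms, each diagonal term factors as
`⟨P_{c,r}, P_{c',r}⟩ ⟨Q_{r,b}, Q_{r,b'}⟩ · n = δ_{c,c'} δ_{b,b'} n`, and what remains is `n` times
the inner product of rows `a` and `a'` of `H^{b,c}`, i.e. `n³ δ_{a,a'}`.
-/

open scoped Kronecker

namespace Matrix

theorem sum_vecMulVec_star_eq_one {R ι D : Type*} [CommRing R] [StarRing R]
    [Fintype ι] [DecidableEq ι] [Fintype D] [DecidableEq D] (p : ι → D → R)
    (hcard : Fintype.card ι = Fintype.card D)
    (hp : ∀ r s, star (p r) ⬝ᵥ p s = if r = s then 1 else 0) :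
    ∑ r, vecMulVec (p r) (star (p r)) = 1 := by
  let N : Matrix D ι R := of fun i r => p r i
  have hN : Nᴴ * N = 1 := by
    ext r s
    simpa [N, mul_apply, one_apply, dotProduct] using hp r s
  have hN' := (mul_eq_one_comm_of_equiv (Fintype.equivOfCardEq hcard)).mp hN
  ext i j
  simpa [N, mul_apply, Matrix.sum_apply, vecMulVec_apply] using congr_fun₂ hN' i j

section Kronecker

variable {R ι κ l m n o s t : Type*} [CommSemiring R] [Fintype ι]

theorem sum_kronecker (A : ι → Matrix l m R) (B : Matrix n o R) :
    (∑ i, A i) ⊗ₖ B = ∑ i, A i ⊗ₖ B := by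
  ext
  simp [Matrix.sum_apply, Finset.sum_mul]

theorem sum_smul_kronecker_mul_sum_smul_kronecker [Fintype κ] [Fintype m] [Fintype o]
    (a : ι → R) (A : ι → Matrix l m R) (B : ι → Matrix n o R)
    (b : κ → R) (C : κ → Matrix m s R) (D : κ → Matrix o t R) :
    (∑ i, a i • (A i ⊗ₖ B i)) * ∑ j, b j • (C j ⊗ₖ D j) =
      ∑ i, ∑ j, (a i * b j) • ((A i * C j) ⊗ₖ (B i * D j)) := by
  simp_rw [Matrix.sum_mul, Matrix.mul_sum, Matrix.smul_mul, Matrix.mul_smul, smul_smul,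
    ← mul_kronecker_mul]

end Kronecker

end Matrix

section KroneckerCombination

open Matrix

variable {R ι D E F G : Type*} [CommRing R] [StarRing R] [Fintype ι]

def kroneckerCombination (h : ι → R) (p : ι → D → R) (q : ι → F → R) (V : ι → Matrix E G R) :
    Matrix (D × E) (F × G) R :=
  ∑ r, h r • (vecMulVec (p r) (q r) ⊗ₖ V r)

omit [StarRing R] in
theorem kroneckerCombination_apply (h : ι → R) (p : ι → D → R) (q : ι → F → R)
    (V : ι → Matrix E G R) (d : D) (e : E) (f : F) (g : G) :
    kroneckerCombination h p q V (d, e) (f, g) = ∑ r, h r * p r d * q r f * V r e g := by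
  simp [kroneckerCombination, Matrix.sum_apply, vecMulVec_apply, mul_assoc]

theorem conjTranspose_kroneckerCombination (h : ι → R) (p : ι → D → R) (q : ι → F → R)
    (V : ι → Matrix E G R) :
    (kroneckerCombination h p q V)ᴴ = ∑ r, star (h r) • ((vecMulVec (p r) (q r))ᴴ ⊗ₖ (V r)ᴴ) := by
  simp only [kroneckerCombination, conjTranspose_sum, conjTranspose_smul, conjTranspose_kronecker]

theorem kroneckerCombination_mul_conjTranspose [DecidableEq ι] [Fintype F] [Fintype G]
    [DecidableEq D] [DecidableEq E]
    {h : ι → R} {p : ι → D → R} {q : ι → F → R} {V : ι → Matrix E G R}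
    (hh : ∀ r, h r * star (h r) = 1) (hp : ∑ r, vecMulVec (p r) (star (p r)) = 1)
    (hq : ∀ r s, star (q r) ⬝ᵥ q s = if r = s then 1 else 0) (hV : ∀ r, V r * (V r)ᴴ = 1) :
    kroneckerCombination h p q V * (kroneckerCombination h p q V)ᴴ = 1 := by
  have hq' : ∀ r s, q r ⬝ᵥ star (q s) = if r = s then 1 else 0 := fun r s => by
    rw [dotProduct_comm, hq]
    exact if_congr eq_comm rfl rfl
  have hterm : ∀ r s, (h r * star (h s)) •
      ((vecMulVec (p r) (q r) * (vecMulVec (p s) (q s))ᴴ) ⊗ₖ (V r * (V s)ᴴ)) =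
      if r = s then vecMulVec (p r) (star (p r)) ⊗ₖ (1 : Matrix E E R) else 0 := fun r s => by
    split_ifs with hrs
    · subst hrs
      simp [vecMulVec_mul_vecMulVec, hq', hh, hV]
    · simp [vecMulVec_mul_vecMulVec, hq', hrs]
  rw [conjTranspose_kroneckerCombination, kroneckerCombination,
    sum_smul_kronecker_mul_sum_smul_kronecker]
  simp_rw [hterm, Finset.sum_ite_eq, Finset.mem_univ, if_true]
  rw [← sum_kronecker, hp, one_kronecker_one]

theorem trace_conjTranspose_kroneckerCombination_mul [DecidableEq ι] [Fintype D] [Fintype E]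
    [Fintype F] [Fintype G] (h h' : ι → R) (p p' : ι → D → R) (q q' : ι → F → R)
    {V : ι → Matrix E G R} {t : R}
    (hV : ∀ r s, trace ((V r)ᴴ * V s) = if r = s then t else 0) :
    trace ((kroneckerCombination h p q V)ᴴ * kroneckerCombination h' p' q' V) =
      ∑ r, star (h r) * h' r * (star (p r) ⬝ᵥ p' r) * (star (q r) ⬝ᵥ q' r) * t := by
  rw [conjTranspose_kroneckerCombination, kroneckerCombination,
    sum_smul_kronecker_mul_sum_smul_kronecker]
  simp [trace_sum, trace_smul, trace_kronecker, hV, vecMulVec_mul_vecMulVec, trace_vecMulVec,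
    mul_assoc]

end KroneckerCombination

section Structures

variable {A X : Type*} [Fintype A] [Fintype X] [DecidableEq A]

theorem IsHadamard.mul_star_self {H : Matrix A X ℂ} (hH : IsHadamard H) (i : A) (j : X) :
    H i j * star (H i j) = 1 := by
  rw [Complex.star_def, Complex.mul_conj, Complex.normSq_eq_norm_sq, hH.2.1]
  norm_num

theorem IsHadamard.star_dotProduct {H : Matrix A X ℂ} (hH : IsHadamard H) (i j : A) :
    star (H i) ⬝ᵥ H j = if i = j then (Fintype.card A : ℂ) else 0 := by
  rw [dotProduct_comm, if_congr eq_comm rfl rfl, ← hH.2.2 j i]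
  rfl

theorem IsQLS.star_dotProduct_row {Q : A → A → X → ℂ} (hQ : IsQLS Q) (a b c : A) :
    star (Q a b) ⬝ᵥ Q a c = if b = c then 1 else 0 :=
  hQ.2.1 a b c

theorem IsQLS.star_dotProduct_column {Q : A → A → X → ℂ} (hQ : IsQLS Q) (a b c : A) :
    star (Q a c) ⬝ᵥ Q b c = if a = b then 1 else 0 :=
  hQ.2.2 a b c

end Structures

theorem quaternary_ueb_general (n : ℕ)
    (H : Fin (n ^ 2) → Fin (n ^ 2) → Matrix (Fin (n ^ 2)) (Fin (n ^ 2)) ℂ)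
    (P Q : Fin (n ^ 2) → Fin (n ^ 2) → Fin (n ^ 2) → ℂ)
    (V : Fin (n ^ 2) → Matrix (Fin n) (Fin n) ℂ)
    (hH : ∀ b c, IsHadamard (H b c))
    (hP : IsQLS P) (hQ : IsQLS Q)
    (hV : IsUEB V) :
    IsUEB (fun abc : Fin (n ^ 2) × Fin (n ^ 2) × Fin (n ^ 2) =>
      Matrix.of fun (de fg : Fin (n ^ 2) × Fin n) =>
        ∑ r : Fin (n ^ 2),
          H abc.2.1 abc.2.2 abc.1 r * P abc.2.2 r de.1 * Q r abc.2.1 fg.1 *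
            V r de.2 fg.2) := by
  have hU : ∀ abc : Fin (n ^ 2) × Fin (n ^ 2) × Fin (n ^ 2),
      (Matrix.of fun (de fg : Fin (n ^ 2) × Fin n) => ∑ r : Fin (n ^ 2),
        H abc.2.1 abc.2.2 abc.1 r * P abc.2.2 r de.1 * Q r abc.2.1 fg.1 * V r de.2 fg.2) =
      kroneckerCombination (H abc.2.1 abc.2.2 abc.1) (P abc.2.2) (fun r => Q r abc.2.1) V :=
    fun abc => by ext ⟨d, e⟩ ⟨f, g⟩; simp [kroneckerCombination_apply]
  simp_rw [hU]
  refine ⟨by simp; ring, fun ⟨a, b, c⟩ => ?_, fun ⟨a, b, c⟩ ⟨a', b', c'⟩ => ?_⟩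
  · have hunit := kroneckerCombination_mul_conjTranspose ((hH b c).mul_star_self a)
      (Matrix.sum_vecMulVec_star_eq_one (P c) hP.1.symm (hP.star_dotProduct_row c))
      (fun r s => hQ.star_dotProduct_column r s b) fun r => (hV.2.1 r).1
    exact ⟨hunit, mul_eq_one_comm.mp hunit⟩
  · rw [trace_conjTranspose_kroneckerCombination_mul _ _ _ _ _ _ hV.2.2]
    simp_rw [hP.star_dotProduct_column, hQ.star_dotProduct_row]
    by_cases hbc : b = b' ∧ c = c'
    · obtain ⟨rfl, rfl⟩ := hbc
      simp_rw [if_true, mul_one, ← Finset.sum_mul]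
      rw [show ∑ r, star (H b c a r) * H b c a' r = star (H b c a) ⬝ᵥ H b c a' from rfl,
        (hH b c).star_dotProduct]
      simp [ite_mul]
    · rcases not_and_or.mp hbc with hb | hc <;> simp [*]

/-- an (n²,n²)-controlled family of n²-dimensional Hadamard matrices, two
n²-dimensional quantum Latin squares, and a UEB on ℂ^n produce an n³-dimensional UEB
whose entry at row (d,e) and column (f,g) is
`∑_{r∈[n²]} H^{b,c}_{a,r} · P_{c,r,d} · Q_{r,b,f} · V_{r,e,g}`. -/
theorem quaternary_ueb (n : ℕ) (hn : 1 ≤ n)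
    (H : Fin (n ^ 2) → Fin (n ^ 2) → Matrix (Fin (n ^ 2)) (Fin (n ^ 2)) ℂ)
    (P Q : Fin (n ^ 2) → Fin (n ^ 2) → Fin (n ^ 2) → ℂ)
    (V : Fin (n ^ 2) → Matrix (Fin n) (Fin n) ℂ)
    (hH : ∀ b c, IsHadamard (H b c))
    (hP : IsQLS P) (hQ : IsQLS Q)
    (hV : IsUEB V) :
    IsUEB (fun abc : Fin (n ^ 2) × Fin (n ^ 2) × Fin (n ^ 2) =>
      Matrix.of fun (de fg : Fin (n ^ 2) × Fin n) =>
        ∑ r : Fin (n ^ 2),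
          H abc.2.1 abc.2.2 abc.1 r * P abc.2.2 r de.1 * Q r abc.2.1 fg.1 *
            V r de.2 fg.2) :=
  quaternary_ueb_general n H P Q V hH hP hQ hV
end
end
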